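/- There exist absolute constants C₀, c > 0 such that the following holds. Let G be a connected r-regular graph on n vertices with 1 − λ ≥ C₀·√((log n)/n), and consider the BIPS process on G with source v and parameter k = 2. Suppose that at some time t₀ the infected set satisfies |A_{t₀}| ≥ (9/10)·n. Then with probability at least 1 − c·n^{−5} there exists t with t₀ ≤ t ≤ t₀ + ⌈8·(log n)/(1 − λ)⌉ such that A_t = V. -/

import Mathlib

open Finset

noncomputable section

variable {V : Type*}

/-- The random-walk transition matrix `P = A(G)/r` of a graph `G`. -/
def transMatrix [Fintype V] (G : SimpleGraph V) [DecidableRel G.Adj] (r : ℕ) :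
    Matrix V V ℝ :=
  Matrix.of fun x y => if G.Adj x y then (r : ℝ)⁻¹ else 0

/-- `λ = max_{i ≥ 2} |λ_i|`: the largest absolute value of an eigenvalue of the
transition matrix on the space orthogonal to the constant vectors.  For a connected
regular graph this is exactly the second largest eigenvalue in absolute value. -/
def secondEigen [Fintype V] (G : SimpleGraph V) [DecidableRel G.Adj] (r : ℕ) : ℝ :=
  sSup {y : ℝ | ∃ (μ : ℝ) (f : V → ℝ), y = |μ| ∧ f ≠ 0 ∧ (∑ x, f x) = 0 ∧
    (transMatrix G r).mulVec f = μ • f}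

/-- `d_A(x) = |N(x) ∩ A|`. -/
def degIn [Fintype V] [DecidableEq V] (G : SimpleGraph V) [DecidableRel G.Adj]
    (A : Finset V) (x : V) : ℕ :=
  (G.neighborFinset x ∩ A).card

/-- Probability that a vertex `u` choosing `k` uniform random neighbours (with
replacement) in an `r`-regular graph hits the set `A` at least once. -/
def pInf [Fintype V] [DecidableEq V] (G : SimpleGraph V) [DecidableRel G.Adj]
    (r k : ℕ) (A : Finset V) (u : V) : ℝ :=
  1 - (1 - (degIn G A u : ℝ) / (r : ℝ)) ^ k

/-- One-step transition probability of the BIPS process with source `v` and parameter `k`: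
each `u ≠ v` is independently infected with probability `pInf`, and `v` is always infected. -/
def bipsStep [Fintype V] [DecidableEq V] (G : SimpleGraph V) [DecidableRel G.Adj]
    (r k : ℕ) (v : V) (A B : Finset V) : ℝ :=
  if v ∈ B then
    ∏ u ∈ Finset.univ.erase v, (if u ∈ B then pInf G r k A u else 1 - pInf G r k A u)
  else 0

/-- Marginal distribution at time `t` of the Markov chain with one-step transition
probabilities `step` started at `A₀`. -/
def chainProb [Fintype V] [DecidableEq V] (step : Finset V → Finset V → ℝ)
    (A₀ : Finset V) : ℕ → Finset V → ℝ
  | 0, B => if B = A₀ then 1 else 0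
  | (t+1), B => ∑ A : Finset V, chainProb step A₀ t A * step A B

/-- Probability of the trajectory `ω 0, ω 1, …, ω T` for the Markov chain with one-step
transition probabilities `step` started at `A₀`. -/
def trajProb [DecidableEq V] (step : Finset V → Finset V → ℝ) (A₀ : Finset V) (T : ℕ)
    (ω : Fin (T+1) → Finset V) : ℝ :=
  (if ω 0 = A₀ then (1:ℝ) else 0) * ∏ i : Fin T, step (ω i.castSucc) (ω i.succ)

open scoped Classical in
/-- Probability that the trajectory `(A_0, …, A_T)` of the chain satisfies `Q`. -/
def trajPr [Fintype V] [DecidableEq V] (step : Finset V → Finset V → ℝ)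
    (A₀ : Finset V) (T : ℕ) (Q : (Fin (T+1) → Finset V) → Prop) : ℝ :=
  ∑ ω : Fin (T+1) → Finset V, if Q ω then trajProb step A₀ T ω else 0

open scoped Classical in
/-- One-step transition probability of the COBRA process with branching factor `k`:
every vertex of `C` chooses `k` neighbours independently and uniformly at random with
replacement, and `B` is the set of all chosen vertices. -/
def cobraStep [Fintype V] [DecidableEq V] (G : SimpleGraph V) [DecidableRel G.Adj]
    (k : ℕ) (C B : Finset V) : ℝ :=
  ∑ f : ↥C → Fin k → V,
    if (∀ x : ↥C, ∀ i : Fin k, G.Adj (x : V) (f x i)) ∧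
        B = Finset.image (fun p : ↥C × Fin k => f p.1 p.2) Finset.univ then
      ∏ x : ↥C, ((G.degree (x : V) : ℝ)⁻¹) ^ k
    else 0

/-- `Pr(cov(u) > T)`: probability that after `T` rounds of the COBRA process started at
`C_0 = {u}` the sets `C_1, …, C_T` have not yet covered all vertices. -/
def prCovGT [Fintype V] [DecidableEq V] (G : SimpleGraph V) [DecidableRel G.Adj]
    (k : ℕ) (u : V) (T : ℕ) : ℝ :=
  trajPr (cobraStep G k) {u} T (fun ω => ∃ x : V, ∀ s : Fin (T+1), s ≠ 0 → x ∉ ω s)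

/-- `Pr(infec(v) > T)`: probability that after `T` rounds of the BIPS process with
source `v` (started from `A_0 = {v}`) the infected set is not yet the whole vertex set. -/
def prInfecGT [Fintype V] [DecidableEq V] (G : SimpleGraph V) [DecidableRel G.Adj]
    (r k : ℕ) (v : V) (T : ℕ) : ℝ :=
  trajPr (bipsStep G r k v) {v} T (fun ω => ∀ s : Fin (T+1), ω s ≠ Finset.univ)

/-- Probability that a vertex `u` hits `A` when it chooses one uniform random neighbour,
and then with probability `ρ` a second (independent, uniform) neighbour. -/
def pInfRho [Fintype V] [DecidableEq V] (G : SimpleGraph V) [DecidableRel G.Adj]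
    (r : ℕ) (ρ : ℝ) (A : Finset V) (u : V) : ℝ :=
  1 - (1 - (degIn G A u : ℝ) / (r : ℝ)) * (1 - ρ * (degIn G A u : ℝ) / (r : ℝ))

/-- One-step transition probability of the BIPS process with expected branching factor
`1 + ρ` and source `v`. -/
def bipsRhoStep [Fintype V] [DecidableEq V] (G : SimpleGraph V) [DecidableRel G.Adj]
    (r : ℕ) (ρ : ℝ) (v : V) (A B : Finset V) : ℝ :=
  if v ∈ B then
    ∏ u ∈ Finset.univ.erase v,
      (if u ∈ B then pInfRho G r ρ A u else 1 - pInfRho G r ρ A u)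
  else 0

open scoped Classical in
/-- One-step transition probability of the COBRA process with expected branching factor
`1 + ρ`: each vertex of `C` chooses one uniform random neighbour and, independently with
probability `ρ`, a second uniform random neighbour; `B` is the set of all chosen vertices. -/
def cobraRhoStep [Fintype V] [DecidableEq V] (G : SimpleGraph V) [DecidableRel G.Adj]
    (ρ : ℝ) (C B : Finset V) : ℝ :=
  ∑ f : ↥C → V, ∑ g : ↥C → Option V,
    if (∀ x : ↥C, G.Adj (x : V) (f x)) ∧
        (∀ x : ↥C, ∀ y : V, g x = some y → G.Adj (x : V) y) ∧
        B = Finset.image f Finset.univ ∪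
          Finset.univ.biUnion (fun x : ↥C => (g x).toFinset) then
      ∏ x : ↥C, ((G.degree (x : V) : ℝ)⁻¹ *
        Option.elim (g x) (1 - ρ) (fun _ => ρ * (G.degree (x : V) : ℝ)⁻¹))
    else 0

/-- `Pr(cov(u) > T)` for the COBRA process with expected branching factor `1 + ρ`. -/
def prCovRhoGT [Fintype V] [DecidableEq V] (G : SimpleGraph V) [DecidableRel G.Adj]
    (ρ : ℝ) (u : V) (T : ℕ) : ℝ :=
  trajPr (cobraRhoStep G ρ) {u} T (fun ω => ∃ x : V, ∀ s : Fin (T+1), s ≠ 0 → x ∉ ω s)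

end

open scoped Matrix

/-!
While at most a tenth of the vertices is uninfected (call such sets good), a vertex `u ≠ v` stays
uninfected with probability `((P 𝟙_{Aᶜ}) u)²`, so by the spectral bound `‖P h‖ ≤ λ ‖h‖` on
mean-zero vectors the expected number of uninfected vertices shrinks by the factor
`1 - 9/10 (1 - λ)` per round, and a Chernoff bound makes leaving the good sets an event of
probability at most `n⁻⁶` per round. Over `T = ⌈8 log n / (1 - λ)⌉ ≤ n` rounds, the probability of
ever leaving the good sets is at most `T n⁻⁶`, and by Markov's inequality the probability of staying
good without infecting everything is at most `n (1 - 9/10 (1 - λ))ᵀ ≤ n⁻⁵`.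
-/

section BernoulliSet

variable {V : Type*} [Fintype V] [DecidableEq V]

def bernoulliSetProb (q : V → ℝ) (B : Finset V) : ℝ :=
  ∏ u, if u ∈ B then q u else 1 - q u

theorem sum_bernoulliSetProb_mul_prod (q a b : V → ℝ) :
    ∑ B, bernoulliSetProb q B * ∏ u, (if u ∈ B then a u else b u) =
      ∏ u, (q u * a u + (1 - q u) * b u) := by
  rw [Fintype.prod_add]
  refine Finset.sum_congr rfl fun B _ => ?_
  rw [bernoulliSetProb, ← Finset.prod_mul_distrib, ← Finset.prod_mul_prod_compl B]
  congr 1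
  · exact Finset.prod_congr rfl fun u hu => by simp [hu]
  · exact Finset.prod_congr rfl fun u hu => by simp [Finset.mem_compl.mp hu]

theorem sum_bernoulliSetProb (q : V → ℝ) : ∑ B, bernoulliSetProb q B = 1 := by
  simpa using sum_bernoulliSetProb_mul_prod q 1 1

theorem bernoulliSetProb_nonneg {q : V → ℝ} (hq : ∀ u, q u ∈ Set.Icc 0 1) (B : Finset V) :
    0 ≤ bernoulliSetProb q B :=
  Finset.prod_nonneg fun u _ => by
    have := hq u
    split_ifs <;> simp only [Set.mem_Icc] at this <;> linarith

theorem sum_bernoulliSetProb_mul_card_compl (q : V → ℝ) :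
    ∑ B, bernoulliSetProb q B * (#Bᶜ : ℝ) = ∑ u, (1 - q u) := by
  have hmarginal (w : V) : ∑ B, bernoulliSetProb q B * (if w ∈ B then 0 else 1) = 1 - q w := by
    have := sum_bernoulliSetProb_mul_prod q (fun u => if u = w then 0 else 1) 1
    rw [Finset.prod_eq_single w (fun u _ hu => by simp [hu]) (by simp)] at this
    convert this using 3 with B
    · rw [Finset.prod_eq_single w (fun u _ hu => by simp [hu]) (by simp)]
      split_ifs <;> simp_all
    · simp
  have hcard (B : Finset V) : (#Bᶜ : ℝ) = ∑ w, if w ∈ B then 0 else 1 := by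
    simp [Finset.sum_ite, Finset.filter_not, Finset.compl_eq_univ_sdiff]
  simp_rw [hcard, Finset.mul_sum]
  rw [Finset.sum_comm]
  exact Finset.sum_congr rfl fun w _ => hmarginal w

theorem sum_bernoulliSetProb_mul_card_compl_gt_le {q : V → ℝ} (hq : ∀ u, q u ∈ Set.Icc 0 1)
    {s : ℝ} (hs : 0 ≤ s) (m : ℝ) :
    ∑ B, bernoulliSetProb q B * (if (#Bᶜ : ℝ) ≤ m then 0 else 1) ≤
      Real.exp ((Real.exp s - 1) * ∑ u, (1 - q u) - s * m) := by
  have hmgf : ∑ B, bernoulliSetProb q B * Real.exp s ^ #Bᶜ =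
      ∏ u, (1 + (1 - q u) * (Real.exp s - 1)) := by
    convert sum_bernoulliSetProb_mul_prod q (fun _ => 1) (fun _ => Real.exp s) using 2 with B
    · rw [Finset.prod_ite, Finset.prod_const_one, one_mul, Finset.prod_const,
        Finset.filter_not, Finset.filter_mem_eq_inter, Finset.univ_inter,
        Finset.compl_eq_univ_sdiff]
    · ring
  have hmarkov (B : Finset V) :
      (if (#Bᶜ : ℝ) ≤ m then 0 else 1) ≤ Real.exp (-(s * m)) * Real.exp s ^ #Bᶜ := by
    rw [← Real.exp_nat_mul, ← Real.exp_add]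
    split_ifs with h
    · positivity
    · exact Real.one_le_exp (by nlinarith)
  calc ∑ B, bernoulliSetProb q B * (if (#Bᶜ : ℝ) ≤ m then 0 else 1)
      ≤ ∑ B, bernoulliSetProb q B * (Real.exp (-(s * m)) * Real.exp s ^ #Bᶜ) :=
        Finset.sum_le_sum fun B _ =>
          mul_le_mul_of_nonneg_left (hmarkov B) (bernoulliSetProb_nonneg hq B)
    _ = Real.exp (-(s * m)) * ∏ u, (1 + (1 - q u) * (Real.exp s - 1)) := by
        rw [← hmgf, Finset.mul_sum]
        exact Finset.sum_congr rfl fun B _ => by ring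
    _ ≤ Real.exp (-(s * m)) * ∏ u, Real.exp ((1 - q u) * (Real.exp s - 1)) := by
        refine mul_le_mul_of_nonneg_left (Finset.prod_le_prod (fun u _ => ?_) fun u _ => ?_)
          (Real.exp_nonneg _)
        · have := (hq u).2
          have := Real.one_le_exp hs
          nlinarith
        · rw [add_comm]
          exact Real.add_one_le_exp _
    _ = Real.exp ((Real.exp s - 1) * ∑ u, (1 - q u) - s * m) := by
        rw [← Real.exp_sum, ← Real.exp_add, Finset.mul_sum, neg_add_eq_sub]
        simp only [mul_comm]

end BernoulliSet

section Trajectory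

variable {V : Type*} [DecidableEq V] (step : Finset V → Finset V → ℝ) (A₀ : Finset V)

theorem trajProb_snoc (T : ℕ) (ω : Fin (T + 1) → Finset V) (B : Finset V) :
    trajProb step A₀ (T + 1) (Fin.snoc ω B) =
      trajProb step A₀ T ω * step (ω (Fin.last T)) B := by
  simp only [trajProb, Fin.prod_univ_castSucc, Fin.snoc_castSucc, Fin.succ_last, Fin.snoc_last,
    Fin.succ_castSucc]
  rw [show (0 : Fin (T + 2)) = Fin.castSucc 0 from rfl, Fin.snoc_castSucc, mul_assoc]

theorem trajProb_nonneg (hstep : ∀ A B, 0 ≤ step A B) {T : ℕ} (ω : Fin (T + 1) → Finset V) :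
    0 ≤ trajProb step A₀ T ω :=
  mul_nonneg (by split_ifs <;> norm_num) (Finset.prod_nonneg fun _ _ => hstep _ _)

variable [Fintype V]

theorem sum_trajProb_succ_mul (T : ℕ) (F : (Fin (T + 2) → Finset V) → ℝ) :
    ∑ ω, trajProb step A₀ (T + 1) ω * F ω =
      ∑ ω, trajProb step A₀ T ω * ∑ B, step (ω (Fin.last T)) B * F (Fin.snoc ω B) := by
  rw [← (Fin.snocEquiv fun _ => Finset V).sum_comp, Fintype.sum_prod_type_right]
  refine Finset.sum_congr rfl fun ω _ => ?_
  rw [Finset.mul_sum]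
  refine Finset.sum_congr rfl fun B _ => ?_
  rw [← mul_assoc, ← trajProb_snoc]
  rfl

theorem sum_trajProb_zero_mul (F : (Fin 1 → Finset V) → ℝ) :
    ∑ ω, trajProb step A₀ 0 ω * F ω = F (fun _ => A₀) := by
  rw [Fintype.sum_eq_single (fun _ => A₀) fun ω hω => ?_]
  · simp [trajProb]
  · have : ω 0 ≠ A₀ := fun h => hω (funext fun i => by rwa [Fin.fin_one_eq_zero i])
    simp [trajProb, this]

theorem trajPr_nonneg (hstep : ∀ A B, 0 ≤ step A B) (T : ℕ)
    (Q : (Fin (T + 1) → Finset V) → Prop) :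
    0 ≤ trajPr step A₀ T Q :=
  Finset.sum_nonneg fun ω _ => by
    split_ifs
    exacts [trajProb_nonneg step A₀ hstep ω, le_rfl]

theorem sum_trajProb (hstep : ∀ A, ∑ B, step A B = 1) (T : ℕ) :
    ∑ ω, trajProb step A₀ T ω = 1 := by
  induction T with
  | zero => simpa using sum_trajProb_zero_mul step A₀ fun _ => 1
  | succ T ih => simpa [hstep, ih] using sum_trajProb_succ_mul step A₀ T fun _ => 1

variable {step A₀} (good : Finset V → Prop) [DecidablePred good]

theorem sum_trajProb_mul_not_forall_good_le (hstep₀ : ∀ A B, 0 ≤ step A B)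
    (hstep₁ : ∀ A, ∑ B, step A B = 1) {ε : ℝ}
    (hescape : ∀ A, good A → ∑ B, step A B * (if good B then 0 else 1) ≤ ε)
    (hA₀ : good A₀) (T : ℕ) :
    ∑ ω, trajProb step A₀ T ω * (if ∀ t, good (ω t) then 0 else 1) ≤ T * ε := by
  have hε : 0 ≤ ε := (Finset.sum_nonneg fun B _ => by
    have := hstep₀ A₀ B; split_ifs <;> simp [this]).trans (hescape A₀ hA₀)
  induction T with
  | zero => rw [sum_trajProb_zero_mul]; simp [hA₀]
  | succ T ih =>
    have hstep (ω : Fin (T + 1) → Finset V) :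
        ∑ B, step (ω (Fin.last T)) B *
            (if ∀ t, good ((Fin.snoc ω B : Fin (T + 2) → Finset V) t) then 0 else 1) ≤
          (if ∀ t, good (ω t) then 0 else 1) + ε := by
      simp only [Fin.forall_fin_succ' (n := T + 1), Fin.snoc_castSucc, Fin.snoc_last]
      by_cases hω : ∀ t, good (ω t)
      · simpa [hω] using hescape _ (hω _)
      · simpa [hω, hstep₁] using hε
    calc ∑ ω, trajProb step A₀ (T + 1) ω * (if ∀ t, good (ω t) then 0 else 1)
        ≤ ∑ ω, trajProb step A₀ T ω * ((if ∀ t, good (ω t) then 0 else 1) + ε) := by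
          rw [sum_trajProb_succ_mul]
          exact Finset.sum_le_sum fun ω _ =>
            mul_le_mul_of_nonneg_left (hstep ω) (trajProb_nonneg step A₀ hstep₀ ω)
      _ ≤ (T + 1 : ℕ) * ε := by
          simp only [mul_add, Finset.sum_add_distrib, ← Finset.sum_mul,
            sum_trajProb step A₀ hstep₁]
          push_cast
          linarith

theorem sum_trajProb_mul_forall_good_le (hstep₀ : ∀ A B, 0 ≤ step A B) {f : Finset V → ℝ}
    (hf : ∀ A, 0 ≤ f A) {γ : ℝ} (hγ : 0 ≤ γ)
    (hdrift : ∀ A, good A → ∑ B, step A B * f B ≤ γ * f A) (T : ℕ) :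
    ∑ ω, trajProb step A₀ T ω * (if ∀ t, good (ω t) then f (ω (Fin.last T)) else 0) ≤
      γ ^ T * f A₀ := by
  induction T with
  | zero => rw [sum_trajProb_zero_mul]; split_ifs <;> simp [hf]
  | succ T ih =>
    have hstep (ω : Fin (T + 1) → Finset V) :
        ∑ B, step (ω (Fin.last T)) B *
            (if ∀ t, good ((Fin.snoc ω B : Fin (T + 2) → Finset V) t) then
              f ((Fin.snoc ω B : Fin (T + 2) → Finset V) (Fin.last (T + 1))) else 0) ≤
          γ * (if ∀ t, good (ω t) then f (ω (Fin.last T)) else 0) := by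
      simp only [Fin.forall_fin_succ' (n := T + 1), Fin.snoc_castSucc, Fin.snoc_last]
      by_cases hω : ∀ t, good (ω t)
      · refine le_trans (Finset.sum_le_sum fun B _ => ?_) (by simpa [hω] using hdrift _ (hω _))
        refine mul_le_mul_of_nonneg_left ?_ (hstep₀ _ _)
        split_ifs <;> simp [hf]
      · simp [hω]
    calc ∑ ω, trajProb step A₀ (T + 1) ω *
          (if ∀ t, good (ω t) then f (ω (Fin.last (T + 1))) else 0)
        ≤ ∑ ω, trajProb step A₀ T ω *
            (γ * (if ∀ t, good (ω t) then f (ω (Fin.last T)) else 0)) := by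
          rw [sum_trajProb_succ_mul]
          exact Finset.sum_le_sum fun ω _ =>
            mul_le_mul_of_nonneg_left (hstep ω) (trajProb_nonneg step A₀ hstep₀ ω)
      _ ≤ γ ^ (T + 1) * f A₀ := by
          simp only [mul_left_comm _ γ, ← Finset.mul_sum]
          rw [pow_succ', mul_assoc]
          exact mul_le_mul_of_nonneg_left ih hγ

theorem one_sub_le_trajPr_exists (hstep₀ : ∀ A B, 0 ≤ step A B)
    (hstep₁ : ∀ A, ∑ B, step A B = 1) {ε γ : ℝ} {f : Finset V → ℝ} (hf : ∀ A, 0 ≤ f A)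
    (hγ : 0 ≤ γ) (hescape : ∀ A, good A → ∑ B, step A B * (if good B then 0 else 1) ≤ ε)
    (hdrift : ∀ A, good A → ∑ B, step A B * f B ≤ γ * f A) (hA₀ : good A₀)
    (Z : Finset V → Prop) (hZ : ∀ A, ¬ Z A → 1 ≤ f A) (T : ℕ) :
    1 - (T * ε + γ ^ T * f A₀) ≤ trajPr step A₀ T (fun ω => ∃ t, Z (ω t)) := by
  classical
  -- a trajectory that never enters `Z` either leaves `good` or ends in a state with `1 ≤ f`
  have hcover (ω : Fin (T + 1) → Finset V) :
      trajProb step A₀ T ω ≤ (if ∃ t, Z (ω t) then trajProb step A₀ T ω else 0) +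
        trajProb step A₀ T ω * (if ∀ t, good (ω t) then 0 else 1) +
        trajProb step A₀ T ω * (if ∀ t, good (ω t) then f (ω (Fin.last T)) else 0) := by
    have hp := trajProb_nonneg step A₀ hstep₀ ω
    by_cases hZω : ∃ t, Z (ω t)
    · have := hf (ω (Fin.last T))
      simp only [hZω, if_true]
      split_ifs <;> nlinarith
    · have := hZ (ω (Fin.last T)) fun h => hZω ⟨_, h⟩
      simp only [hZω, if_false]
      split_ifs <;> nlinarith
  have := Finset.sum_le_sum fun ω (_ : ω ∈ Finset.univ) => hcover ω
  rw [sum_trajProb step A₀ hstep₁, Finset.sum_add_distrib, Finset.sum_add_distrib] at this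
  have h₁ := sum_trajProb_mul_not_forall_good_le good hstep₀ hstep₁ hescape hA₀ T
  have h₂ := sum_trajProb_mul_forall_good_le good hstep₀ hf hγ hdrift T (A₀ := A₀)
  have htraj : trajPr step A₀ T (fun ω => ∃ t, Z (ω t)) =
      ∑ ω, if ∃ t, Z (ω t) then trajProb step A₀ T ω else 0 := by
    unfold trajPr
    congr! 2
  linarith

end Trajectory

theorem LinearMap.IsSymmetric.norm_sq_apply_le {E : Type*} [NormedAddCommGroup E]
    [InnerProductSpace ℝ E] [FiniteDimensional ℝ E] {T : E →ₗ[ℝ] E} (hT : T.IsSymmetric)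
    {c : ℝ} (hc : ∀ μ, Module.End.HasEigenvalue T μ → |μ| ≤ c) (x : E) :
    ‖T x‖ ^ 2 ≤ c ^ 2 * ‖x‖ ^ 2 := by
  set b := hT.eigenvectorBasis rfl
  rw [← b.repr.norm_map x, ← b.repr.norm_map (T x), EuclideanSpace.real_norm_sq_eq,
    EuclideanSpace.real_norm_sq_eq, Finset.mul_sum]
  refine Finset.sum_le_sum fun i _ => ?_
  rw [hT.eigenvectorBasis_apply_self_apply, mul_pow]
  have hμ := hc _ (hT.hasEigenvalue_eigenvalues rfl i)
  refine mul_le_mul_of_nonneg_right ?_ (sq_nonneg _)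
  exact sq_le_sq.mpr (hμ.trans (le_abs_self c))

section TransMatrix

variable {V : Type*} [Fintype V] (G : SimpleGraph V) [DecidableRel G.Adj] {r : ℕ}

theorem transMatrix_transpose : (transMatrix G r)ᵀ = transMatrix G r := by
  ext x y
  simp [transMatrix, G.adj_comm]

theorem transMatrix_isHermitian : (transMatrix G r).IsHermitian := by
  rw [Matrix.IsHermitian, Matrix.conjTranspose_eq_transpose_of_trivial, transMatrix_transpose]

variable {G}

theorem sum_transMatrix_row (hreg : G.IsRegularOfDegree r) (hr : r ≠ 0) (x : V) :
    ∑ y, transMatrix G r x y = 1 := by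
  simp only [transMatrix, Matrix.of_apply]
  rw [Finset.sum_ite, Finset.sum_const_zero, add_zero, Finset.sum_const, nsmul_eq_mul,
    ← SimpleGraph.neighborFinset_eq_filter, G.card_neighborFinset_eq_degree, hreg x]
  exact mul_inv_cancel₀ (Nat.cast_ne_zero.mpr hr)

theorem transMatrix_mulVec_const (hreg : G.IsRegularOfDegree r) (hr : r ≠ 0) (c : ℝ) :
    transMatrix G r *ᵥ (fun _ => c) = fun _ => c := by
  ext x
  simp [Matrix.mulVec, dotProduct, ← Finset.sum_mul, sum_transMatrix_row hreg hr x]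

theorem sum_transMatrix_mulVec (hreg : G.IsRegularOfDegree r) (hr : r ≠ 0) (f : V → ℝ) :
    ∑ x, (transMatrix G r *ᵥ f) x = ∑ x, f x := by
  simp only [Matrix.mulVec, dotProduct]
  rw [Finset.sum_comm]
  refine Finset.sum_congr rfl fun y _ => ?_
  have hcol : ∑ x, transMatrix G r x y = 1 := by
    simpa [transMatrix, G.adj_comm] using sum_transMatrix_row hreg hr y
  rw [← Finset.sum_mul, hcol, one_mul]

variable (V) in
noncomputable def averagingMatrix : Matrix V V ℝ := Matrix.of fun _ _ => (Fintype.card V : ℝ)⁻¹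

theorem averagingMatrix_mulVec (f : V → ℝ) :
    averagingMatrix V *ᵥ f = fun _ => (Fintype.card V : ℝ)⁻¹ * ∑ x, f x := by
  ext
  simp [averagingMatrix, Matrix.mulVec, dotProduct, Finset.mul_sum]

theorem averagingMatrix_isHermitian : (averagingMatrix V).IsHermitian := by
  ext
  simp [averagingMatrix]

theorem secondEigen_nonneg : 0 ≤ secondEigen G r :=
  Real.sSup_nonneg (by rintro _ ⟨μ, f, rfl, -⟩; exact abs_nonneg μ)

variable [DecidableEq V] (G)

theorem transMatrix_mulVec_indicator (S : Finset V) (x : V) :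
    (transMatrix G r *ᵥ fun y => if y ∈ S then 1 else 0) x = degIn G S x / r := by
  simp only [Matrix.mulVec, dotProduct, transMatrix, Matrix.of_apply, mul_ite, mul_one,
    mul_zero, degIn]
  rw [Finset.sum_ite_mem, Finset.sum_ite, Finset.sum_const_zero, add_zero, Finset.sum_const,
    nsmul_eq_mul, div_eq_mul_inv, Finset.univ_inter]
  congr 3
  ext y
  simp [and_comm]

variable {G}

theorem abs_le_one_of_transMatrix_mulVec_eq_smul (hreg : G.IsRegularOfDegree r) (hr : r ≠ 0)
    {μ : ℝ} {f : V → ℝ} (hf : f ≠ 0) (hμ : transMatrix G r *ᵥ f = μ • f) : |μ| ≤ 1 := by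
  have heig : Module.End.HasEigenvalue (Matrix.toLin' (transMatrix G r)) μ :=
    Module.End.hasEigenvalue_of_hasEigenvector
      ⟨Module.End.mem_eigenspace_iff.mpr (by rwa [Matrix.toLin'_apply]), hf⟩
  obtain ⟨k, hk⟩ := eigenvalue_mem_ball heig
  rw [Metric.mem_closedBall, Real.dist_eq] at hk
  have hdiag : transMatrix G r k k = 0 := by simp [transMatrix]
  have hentry (j : V) : ‖transMatrix G r k j‖ = transMatrix G r k j := by
    simp only [transMatrix, Matrix.of_apply]
    split_ifs <;> simp
  calc |μ| = |μ - transMatrix G r k k| := by rw [hdiag, sub_zero]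
    _ ≤ ∑ j ∈ Finset.univ.erase k, ‖transMatrix G r k j‖ := hk
    _ ≤ ∑ j, transMatrix G r k j := by
        simp only [hentry]
        exact Finset.sum_le_sum_of_subset_of_nonneg (Finset.erase_subset k _)
          fun j _ _ => hentry j ▸ norm_nonneg _
    _ = 1 := sum_transMatrix_row hreg hr k

theorem secondEigen_le_one (hreg : G.IsRegularOfDegree r) (hr : r ≠ 0) : secondEigen G r ≤ 1 :=
  Real.sSup_le (by
    rintro _ ⟨μ, f, rfl, hf, -, hμ⟩
    exact abs_le_one_of_transMatrix_mulVec_eq_smul hreg hr hf hμ) zero_le_one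

theorem abs_le_secondEigen (hreg : G.IsRegularOfDegree r) (hr : r ≠ 0) {μ : ℝ} {f : V → ℝ}
    (hf : f ≠ 0) (hsum : ∑ x, f x = 0) (hμ : transMatrix G r *ᵥ f = μ • f) :
    |μ| ≤ secondEigen G r :=
  le_csSup ⟨1, by
    rintro _ ⟨μ', f', rfl, hf', -, hμ'⟩
    exact abs_le_one_of_transMatrix_mulVec_eq_smul hreg hr hf' hμ'⟩ ⟨μ, f, rfl, hf, hsum, hμ⟩

/-- `P` and the averaging matrix both preserve `∑ x, f x`, so an eigenvector of their difference
with a nonzero eigenvalue has mean zero and is an eigenvector of `P` for the same eigenvalue. -/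
theorem abs_le_secondEigen_of_hasEigenvalue (hreg : G.IsRegularOfDegree r) (hr : r ≠ 0) {μ : ℝ}
    (hμ : Module.End.HasEigenvalue
      (Matrix.toEuclideanLin (transMatrix G r - averagingMatrix V)) μ) :
    |μ| ≤ secondEigen G r := by
  obtain ⟨v, hv, hv0⟩ := hμ.exists_hasEigenvector
  set f := v.ofLp
  have hf : (transMatrix G r - averagingMatrix V) *ᵥ f = μ • f :=
    congrArg WithLp.ofLp (Module.End.mem_eigenspace_iff.mp hv)
  have hf0 : f ≠ 0 := fun h => hv0 (by simpa [f] using congrArg (WithLp.toLp 2) h)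
  have hcard : (Fintype.card V : ℝ) ≠ 0 := by
    obtain ⟨x, -⟩ := Function.ne_iff.mp hf0
    have : Nonempty V := ⟨x⟩
    exact Nat.cast_ne_zero.mpr Fintype.card_ne_zero
  have hsum : μ * ∑ x, f x = 0 := by
    have := congrArg (fun g => ∑ x, g x) hf
    simp only [Matrix.sub_mulVec, averagingMatrix_mulVec, Pi.sub_apply, Finset.sum_sub_distrib,
      sum_transMatrix_mulVec hreg hr, Finset.sum_const, Finset.card_univ, nsmul_eq_mul,
      Pi.smul_apply, smul_eq_mul, ← Finset.mul_sum] at this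
    rw [← this, ← mul_assoc, mul_inv_cancel₀ hcard]
    ring
  rcases mul_eq_zero.mp hsum with rfl | hs
  · simpa using secondEigen_nonneg
  · refine abs_le_secondEigen hreg hr hf0 hs ?_
    rw [← hf, Matrix.sub_mulVec, averagingMatrix_mulVec, hs]
    ext
    simp

theorem sum_sq_transMatrix_mulVec_le (hreg : G.IsRegularOfDegree r) (hr : r ≠ 0) {h : V → ℝ}
    (hsum : ∑ x, h x = 0) :
    ∑ x, (transMatrix G r *ᵥ h) x ^ 2 ≤ secondEigen G r ^ 2 * ∑ x, h x ^ 2 := by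
  have hM : (transMatrix G r - averagingMatrix V).IsHermitian :=
    (transMatrix_isHermitian G).sub averagingMatrix_isHermitian
  have := (Matrix.isSymmetric_toEuclideanLin_iff.mpr hM).norm_sq_apply_le
    (fun μ hμ => abs_le_secondEigen_of_hasEigenvalue hreg hr hμ) (WithLp.toLp 2 h)
  simpa [EuclideanSpace.real_norm_sq_eq, Matrix.sub_mulVec, averagingMatrix_mulVec, hsum]
    using this

theorem sum_sq_transMatrix_mulVec_indicator_le (hreg : G.IsRegularOfDegree r) (hr : r ≠ 0)
    (S : Finset V) :
    ∑ x, (transMatrix G r *ᵥ fun y => if y ∈ S then 1 else 0) x ^ 2 ≤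
      #S * (#S / Fintype.card V + secondEigen G r ^ 2 * (1 - #S / Fintype.card V)) := by
  set β : ℝ := #S / Fintype.card V
  have hβ : (Fintype.card V : ℝ) * β = #S := mul_div_cancel_of_imp' fun hn => by
    have hS := Finset.card_le_univ S
    rw [Nat.cast_eq_zero.mp hn, Nat.le_zero] at hS
    simp [hS]
  set h : V → ℝ := fun y => (if y ∈ S then 1 else 0) - β
  have hsum : ∑ y, h y = 0 := by
    simp only [h, Finset.sum_sub_distrib, Finset.sum_boole, Finset.sum_const, Finset.card_univ,
      nsmul_eq_mul, Finset.filter_mem_eq_inter, Finset.univ_inter, hβ, sub_self]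
  have hsq : ∑ y, h y ^ 2 = #S * (1 - β) := by
    have (y : V) : h y ^ 2 = (if y ∈ S then 1 else 0) * (1 - 2 * β) + β ^ 2 := by
      simp only [h]; split_ifs <;> ring
    simp only [this, Finset.sum_add_distrib, ← Finset.sum_mul, Finset.sum_boole,
      Finset.sum_const, Finset.card_univ, nsmul_eq_mul, Finset.filter_mem_eq_inter,
      Finset.univ_inter]
    linear_combination β * hβ
  have hPh : transMatrix G r *ᵥ (fun y => if y ∈ S then 1 else 0) =
      fun x => (transMatrix G r *ᵥ h) x + β := by
    rw [show (fun y => if y ∈ S then (1 : ℝ) else 0) = h + fun _ => β by ext; simp [h],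
      Matrix.mulVec_add, transMatrix_mulVec_const hreg hr]
    rfl
  have hspec := sum_sq_transMatrix_mulVec_le hreg hr hsum
  rw [hsq] at hspec
  calc ∑ x, (transMatrix G r *ᵥ fun y => if y ∈ S then 1 else 0) x ^ 2
      = ∑ x, (transMatrix G r *ᵥ h) x ^ 2 + 2 * β * ∑ x, (transMatrix G r *ᵥ h) x +
          Fintype.card V * β ^ 2 := by
        simp only [hPh, add_sq, Finset.sum_add_distrib, Finset.sum_const, Finset.card_univ,
          nsmul_eq_mul, ← Finset.sum_mul, ← Finset.mul_sum]
        ring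
    _ ≤ #S * (β + secondEigen G r ^ 2 * (1 - β)) := by
        have : (Fintype.card V : ℝ) * β ^ 2 = #S * β := by rw [← hβ]; ring
        rw [sum_transMatrix_mulVec hreg hr, hsum]
        linarith

end TransMatrix

theorem sq_mul_le_sq_mul_of_mul_sqrt_div_le {a x n g : ℝ} (ha : 0 ≤ a) (hx : 0 ≤ x) (hn : 0 < n)
    (h : a * √(x / n) ≤ g) : a ^ 2 * x ≤ g ^ 2 * n := by
  have := pow_le_pow_left₀ (by positivity) h 2
  rwa [mul_pow, Real.sq_sqrt (by positivity), mul_div_assoc', div_le_iff₀ hn] at this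

theorem ceil_mul_exp_add_pow_mul_le {n g X : ℝ} (hn : 2 ≤ n) (hg : 0 < g) (hg₁ : g ≤ 1)
    (hgap : 400 * Real.log n ≤ g ^ 2 * n) (hX : X ≤ n) :
    ⌈8 * Real.log n / g⌉₊ * Real.exp (-(6 * Real.log n)) +
        (1 - 9 / 10 * g) ^ ⌈8 * Real.log n / g⌉₊ * X ≤ 2 / n ^ 5 := by
  set L := Real.log n
  set T := ⌈8 * L / g⌉₊
  set ε := Real.exp (-(6 * L))
  have hn₀ : 0 < n := by linarith
  have hL : 0 < L := Real.log_pos (by linarith)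
  have hTn : (T : ℝ) ≤ n := by
    have := Nat.ceil_lt_add_one (div_nonneg (by linarith) hg.le : 0 ≤ 8 * L / g)
    have : 8 * L / g ≤ n / 50 := by
      rw [div_le_iff₀ hg]
      nlinarith
    linarith
  have hγ : (1 - 9 / 10 * g) ^ T ≤ ε := by
    have hgT : 8 * L ≤ g * T := by
      rw [← div_le_iff₀' hg]
      exact Nat.le_ceil _
    have h₁ : 1 - 9 / 10 * g ≤ Real.exp (-(9 / 10 * g)) := by
      linarith [Real.add_one_le_exp (-(9 / 10 * g))]
    refine (pow_le_pow_left₀ (by linarith) h₁ T).trans ?_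
    rw [← Real.exp_nat_mul]
    exact Real.exp_le_exp.mpr (by nlinarith)
  have h2n : 2 / n ^ 5 = 2 * n * ε := by
    have hεn : ε * n ^ 6 = 1 := by
      rw [← Real.exp_log hn₀, ← Real.exp_nat_mul, ← Real.exp_add]
      simp [L]
    rw [div_eq_iff (pow_pos hn₀ 5).ne']
    linear_combination (-2) * hεn
  have hε : 0 ≤ ε := (Real.exp_pos _).le
  rw [h2n]
  nlinarith [mul_le_mul_of_nonneg_right hTn hε, mul_le_mul_of_nonneg_right hγ hn₀.le,
    mul_le_mul_of_nonneg_left hX (pow_nonneg (by linarith : 0 ≤ 1 - 9 / 10 * g) T)]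

section BIPS

variable {V : Type*} [Fintype V] [DecidableEq V] {G : SimpleGraph V} [DecidableRel G.Adj]
  {r : ℕ}

theorem degIn_add_degIn_compl (hreg : G.IsRegularOfDegree r) (A : Finset V) (u : V) :
    degIn G A u + degIn G Aᶜ u = r := by
  rw [degIn, degIn, ← Finset.sdiff_eq_inter_compl, Finset.card_inter_add_card_sdiff,
    G.card_neighborFinset_eq_degree, hreg u]

theorem pInf_mem_Icc (hreg : G.IsRegularOfDegree r) (k : ℕ) (A : Finset V) (u : V) :
    pInf G r k A u ∈ Set.Icc 0 1 := by
  have hdeg : (degIn G A u : ℝ) ≤ r := by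
    exact_mod_cast (Nat.le.intro (degIn_add_degIn_compl hreg A u))
  have h₀ : 0 ≤ 1 - (degIn G A u : ℝ) / r := sub_nonneg.mpr (div_le_one_of_le₀ hdeg r.cast_nonneg)
  have h₁ : 1 - (degIn G A u : ℝ) / r ≤ 1 := sub_le_self _ (by positivity)
  exact ⟨sub_nonneg.mpr (pow_le_one₀ h₀ h₁), sub_le_self _ (pow_nonneg h₀ k)⟩

theorem update_pInf_mem_Icc (hreg : G.IsRegularOfDegree r) (k : ℕ) (A : Finset V) (v u : V) :
    Function.update (pInf G r k A) v 1 u ∈ Set.Icc 0 1 := by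
  rcases eq_or_ne u v with rfl | huv
  · simp
  · rw [Function.update_of_ne huv]; exact pInf_mem_Icc hreg k A u

theorem bipsStep_eq_bernoulliSetProb (k : ℕ) (v : V) (A : Finset V) :
    bipsStep G r k v A = bernoulliSetProb (Function.update (pInf G r k A) v 1) := by
  ext B
  rw [bernoulliSetProb, ← Finset.mul_prod_erase _ _ (Finset.mem_univ v), bipsStep]
  by_cases hv : v ∈ B
  · simp only [hv, if_true, Function.update_self, one_mul]
    exact Finset.prod_congr rfl fun u hu => by
      rw [Function.update_of_ne (Finset.ne_of_mem_erase hu)]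
  · simp [hv]

theorem bipsStep_nonneg (hreg : G.IsRegularOfDegree r) (k : ℕ) (v : V) (A B : Finset V) :
    0 ≤ bipsStep G r k v A B := by
  rw [bipsStep_eq_bernoulliSetProb]
  exact bernoulliSetProb_nonneg (update_pInf_mem_Icc hreg k A v) B

theorem sum_bipsStep (k : ℕ) (v : V) (A : Finset V) : ∑ B, bipsStep G r k v A B = 1 := by
  rw [bipsStep_eq_bernoulliSetProb]
  exact sum_bernoulliSetProb _

theorem one_sub_pInf_two (hreg : G.IsRegularOfDegree r) (hr : r ≠ 0) (A : Finset V) (u : V) :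
    1 - pInf G r 2 A u = ((transMatrix G r *ᵥ fun y => if y ∈ Aᶜ then 1 else 0) u) ^ 2 := by
  have hsplit : (degIn G A u : ℝ) + degIn G Aᶜ u = r := by
    exact_mod_cast degIn_add_degIn_compl hreg A u
  have hr' : (r : ℝ) ≠ 0 := Nat.cast_ne_zero.mpr hr
  rw [transMatrix_mulVec_indicator, pInf, sub_sub_cancel, eq_sub_of_add_eq' hsplit]
  field_simp

theorem sum_one_sub_pInf_two_le (hreg : G.IsRegularOfDegree r) (hr : r ≠ 0) {A : Finset V}
    (hA : (#Aᶜ : ℝ) ≤ Fintype.card V / 10) :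
    ∑ u, (1 - pInf G r 2 A u) ≤ (1 - 9 / 10 * (1 - secondEigen G r)) * #Aᶜ := by
  simp_rw [one_sub_pInf_two hreg hr]
  refine (sum_sq_transMatrix_mulVec_indicator_le hreg hr Aᶜ).trans ?_
  set β : ℝ := #Aᶜ / Fintype.card V
  have hβ₀ : 0 ≤ β := by positivity
  have hβ₁ : β ≤ 1 / 10 := div_le_of_le_mul₀ (by positivity) (by norm_num) (by linarith)
  have hlam₀ := secondEigen_nonneg (G := G) (r := r)
  have hlam₁ := secondEigen_le_one hreg hr
  rw [mul_comm]
  refine mul_le_mul_of_nonneg_right ?_ (by positivity)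
  nlinarith [mul_nonneg (sub_nonneg.mpr hlam₁) hlam₀, mul_nonneg (sub_nonneg.mpr hlam₁) hβ₀]

theorem sum_one_sub_update_pInf_two_le (hreg : G.IsRegularOfDegree r) (hr : r ≠ 0) (v : V)
    {A : Finset V} (hA : (#Aᶜ : ℝ) ≤ Fintype.card V / 10) :
    ∑ u, (1 - Function.update (pInf G r 2 A) v 1 u) ≤
      (1 - 9 / 10 * (1 - secondEigen G r)) * #Aᶜ := by
  refine le_trans (Finset.sum_le_sum fun u _ => ?_) (sum_one_sub_pInf_two_le hreg hr hA)
  rcases eq_or_ne u v with rfl | huv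
  · simpa using (pInf_mem_Icc hreg 2 A u).2
  · rw [Function.update_of_ne huv]

theorem sum_bipsStep_mul_card_compl_le (hreg : G.IsRegularOfDegree r) (hr : r ≠ 0) (v : V)
    {A : Finset V} (hA : (#Aᶜ : ℝ) ≤ Fintype.card V / 10) :
    ∑ B, bipsStep G r 2 v A B * #Bᶜ ≤ (1 - 9 / 10 * (1 - secondEigen G r)) * #Aᶜ := by
  rw [bipsStep_eq_bernoulliSetProb, sum_bernoulliSetProb_mul_card_compl]
  exact sum_one_sub_update_pInf_two_le hreg hr v hA

theorem sum_bipsStep_mul_card_compl_gt_le (hreg : G.IsRegularOfDegree r) (hr : r ≠ 0) (v : V)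
    {A : Finset V} (hA : (#Aᶜ : ℝ) ≤ Fintype.card V / 10) :
    ∑ B, bipsStep G r 2 v A B * (if (#Bᶜ : ℝ) ≤ Fintype.card V / 10 then 0 else 1) ≤
      Real.exp (-((1 - secondEigen G r) ^ 2 * Fintype.card V / 50)) := by
  set g := 1 - secondEigen G r
  set m : ℝ := Fintype.card V / 10
  have hg₀ : 0 ≤ g := sub_nonneg.mpr (secondEigen_le_one hreg hr)
  have hg₁ : g ≤ 1 := sub_le_self _ secondEigen_nonneg
  have hm : 0 ≤ m := by positivity
  have hq := update_pInf_mem_Icc hreg 2 A v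
  have hμ : ∑ u, (1 - Function.update (pInf G r 2 A) v 1 u) ≤ (1 - 9 / 10 * g) * m :=
    (sum_one_sub_update_pInf_two_le hreg hr v hA).trans
      (mul_le_mul_of_nonneg_left hA (by linarith))
  have hexp : Real.exp (g / 2) - 1 ≤ g / 2 + (g / 2) ^ 2 := by
    have := Real.abs_exp_sub_one_sub_id_le (x := g / 2)
      (by rw [abs_le]; constructor <;> linarith)
    linarith [le_abs_self (Real.exp (g / 2) - 1 - g / 2)]
  have hexp₀ : 0 ≤ Real.exp (g / 2) - 1 := sub_nonneg.mpr (Real.one_le_exp (by positivity))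
  rw [bipsStep_eq_bernoulliSetProb]
  refine (sum_bernoulliSetProb_mul_card_compl_gt_le hq (s := g / 2) (by positivity) m).trans
    (Real.exp_le_exp.mpr ?_)
  calc (Real.exp (g / 2) - 1) * ∑ u, (1 - Function.update (pInf G r 2 A) v 1 u) - g / 2 * m
      ≤ (g / 2 + (g / 2) ^ 2) * ((1 - 9 / 10 * g) * m) - g / 2 * m := by
        have : 0 ≤ ∑ u, (1 - Function.update (pInf G r 2 A) v 1 u) :=
          Finset.sum_nonneg fun u _ => sub_nonneg.mpr (hq u).2
        gcongr
    _ = -(g ^ 2 * (10 * m) / 50) - 9 / 40 * g ^ 3 * m := by ring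
    _ ≤ -(g ^ 2 * (10 * m) / 50) := by
        have : 0 ≤ g ^ 3 * m := by positivity
        linarith
    _ = _ := by simp only [m]; ring_nf

theorem one_sub_le_trajPr_bips_exists_eq_univ (hconn : G.Connected)
    (hreg : G.IsRegularOfDegree r) (v : V) {A₀ : Finset V} (hn : 1 < Fintype.card V)
    (hgap : 400 * Real.log (Fintype.card V) ≤ (1 - secondEigen G r) ^ 2 * Fintype.card V)
    (hA₀ : 9 / 10 * (Fintype.card V : ℝ) ≤ #A₀) :
    1 - 2 / (Fintype.card V : ℝ) ^ 5 ≤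
      trajPr (bipsStep G r 2 v) A₀ ⌈8 * Real.log (Fintype.card V) / (1 - secondEigen G r)⌉₊
        (fun ω => ∃ s, ω s = Finset.univ) := by
  have : Nontrivial V := Fintype.one_lt_card_iff_nontrivial.mp hn
  have hr : r ≠ 0 := (hreg v ▸ hconn.preconnected.degree_pos_of_nontrivial v).ne'
  set n : ℝ := (Fintype.card V : ℝ)
  set g := 1 - secondEigen G r
  have hn₂ : (2 : ℝ) ≤ n := by simp only [n]; exact_mod_cast hn
  have hL : 0 < Real.log n := Real.log_pos (by linarith)
  have hg₀ : 0 ≤ g := sub_nonneg.mpr (secondEigen_le_one hreg hr)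
  have hg₁ : g ≤ 1 := sub_le_self _ secondEigen_nonneg
  have hg : 0 < g := lt_of_le_of_ne hg₀ fun h => by rw [← h] at hgap; nlinarith
  have hA₀c : (#A₀ᶜ : ℝ) ≤ n := by simp only [n]; exact_mod_cast Finset.card_le_univ _
  refine le_trans ?_ (one_sub_le_trajPr_exists (fun A => (#Aᶜ : ℝ) ≤ n / 10)
    (bipsStep_nonneg hreg 2 v) (sum_bipsStep 2 v) (f := fun A => (#Aᶜ : ℝ))
    (γ := 1 - 9 / 10 * g) (ε := Real.exp (-(6 * Real.log n))) (fun A => Nat.cast_nonneg _)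
    (by linarith)
    (fun A hA => (sum_bipsStep_mul_card_compl_gt_le hreg hr v hA).trans
      (Real.exp_le_exp.mpr (show -(g ^ 2 * n / 50) ≤ -(6 * Real.log n) by linarith)))
    (fun A hA => sum_bipsStep_mul_card_compl_le hreg hr v hA) ?_ (· = Finset.univ) ?_ _)
  · linarith [ceil_mul_exp_add_pow_mul_le hn₂ hg hg₁ hgap hA₀c]
  · rw [Finset.card_compl, Nat.cast_sub (Finset.card_le_univ _)]
    linarith
  · intro A hA
    have : A ≠ Finset.univ := hA
    rw [Ne, ← Finset.compl_eq_empty_iff, ← Ne, ← Finset.nonempty_iff_ne_empty] at this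
    exact_mod_cast this.card_pos

end BIPS

universe u

/-- Lemma 9 of the paper.  There are absolute constants `C₀, c > 0`
such that for every connected `r`-regular graph `G` on `n` vertices with
`1 - λ ≥ C₀·√(log n / n)`, if the BIPS process with source `v` and `k = 2` starts from a
set `A₀ ∋ v` with `|A₀| ≥ (9/10)·n`, then with probability at least `1 - c·n^{-5}`
within `⌈8·log n/(1-λ)⌉` further rounds the whole vertex set becomes infected. -/
theorem bips_final_phase :
    ∃ C₀ c : ℝ, 0 < C₀ ∧ 0 < c ∧
      ∀ (V : Type u) [Fintype V] [DecidableEq V] (G : SimpleGraph V)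
        [DecidableRel G.Adj] (r : ℕ),
        G.Connected → G.IsRegularOfDegree r →
        1 - secondEigen G r ≥
          C₀ * Real.sqrt (Real.log (Fintype.card V) / (Fintype.card V)) →
        ∀ (v : V) (A₀ : Finset V), v ∈ A₀ →
          (9/10 : ℝ) * (Fintype.card V : ℝ) ≤ (A₀.card : ℝ) →
          1 - c / (Fintype.card V : ℝ) ^ 5 ≤
            trajPr (bipsStep G r 2 v) A₀
              ⌈8 * Real.log (Fintype.card V) / (1 - secondEigen G r)⌉₊
              (fun ω => ∃ s, ω s = Finset.univ) := by
  refine ⟨20, 2, by norm_num, by norm_num, ?_⟩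
  rintro V _ _ G _ r hconn hreg hgap v A₀ - hA₀
  obtain hn | hn : Fintype.card V = 1 ∨ 1 < Fintype.card V := by
    have := Fintype.card_pos_iff.mpr ⟨v⟩
    omega
  · exact le_trans (by norm_num [hn]) (trajPr_nonneg _ _ (bipsStep_nonneg hreg 2 v) _ _)
  · have hn₀ : (0 : ℝ) < Fintype.card V := by positivity
    have hL : 0 ≤ Real.log (Fintype.card V) := Real.log_nonneg (by exact_mod_cast hn.le)
    have := sq_mul_le_sq_mul_of_mul_sqrt_div_le (by norm_num) hL hn₀ hgap
    exact one_sub_le_trajPr_bips_exists_eq_univ hconn hreg v hn (by linarith) hA₀
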